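/- arXiv:2210.13375 — 7 statements merged into one kernel-verified Lean document; each statement's English description precedes it below -/
import Mathlib

section
/- For letters x_1 < x_2 < ... < x_p < y < z_1 < ... < z_q in a totally ordered alphabet, the words (x_1...x_p)(z_1...z_q)y and (z_1...z_q)(x_1...x_p)y are congruent modulo the stylic congruence. -/
noncomputable section

open FreeMonoid

/-- The defining relations of the stylic congruence: the Knuth (plactic)
relations together with the idempotent relations `a² ≡ a`. -/
inductive StylicRel (A : Type*) [LinearOrder A] : FreeMonoid A → FreeMonoid A → Prop
  | knuth1 {a b c : A} : a < b → b < c →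
      StylicRel A (ofList [b, a, c]) (ofList [b, c, a])
  | knuth2 {a b c : A} : a < b → b < c →
      StylicRel A (ofList [a, c, b]) (ofList [c, a, b])
  | knuth3 {a b : A} : a < b →
      StylicRel A (ofList [b, a, b]) (ofList [b, b, a])
  | knuth4 {a b : A} : a < b →
      StylicRel A (ofList [a, b, a]) (ofList [b, a, a])
  | idem (a : A) : StylicRel A (ofList [a, a]) (ofList [a])

/-- The stylic congruence on the free monoid `A*`. -/
def stylCon (A : Type*) [LinearOrder A] : Con (FreeMonoid A) := conGen (StylicRel A)

/-- The stylic monoid `Styl(A)`. -/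
abbrev Styl (A : Type*) [LinearOrder A] := (stylCon A).Quotient

/-!
Induction on the last letter `c` of `z`, writing `X = x₁⋯x_p` and `Z` for the rest of `z`:
`X Z c y ≡ X Z c y y ≡ X Z y c y ≡ Z X y c y ≡ Z X c y y ≡ Z c X y y ≡ Z c X y`,
using `a² ≡ a`, `aba ≡ baa` (with `y < c`) and the induction hypothesis. In the fifth step `c`
jumps over the increasing word `X` by repeated `acb ≡ cab`, the `b` always being the next
letter of `X y`; this is where `y` is needed at the end.
-/

namespace Styl

variable {A : Type*} [LinearOrder A]

def letter (a : A) : Styl A := (of a : FreeMonoid A)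

def word (l : List A) : Styl A := (l.map letter).prod

@[simp] lemma word_nil : word ([] : List A) = 1 := rfl

@[simp] lemma word_cons (a : A) (l : List A) : word (a :: l) = letter a * word l :=
  List.prod_cons

@[simp] lemma word_append (l₁ l₂ : List A) : word (l₁ ++ l₂) = word l₁ * word l₂ := by
  simp [word]

lemma coe_ofList (l : List A) : ((ofList l : FreeMonoid A) : Styl A) = word l := by
  induction l with
  | nil => rfl
  | cons a l ih => rw [ofList_cons, Con.coe_mul, ih, word_cons, letter]

lemma word_eq_of_stylicRel {u v : List A} (h : StylicRel A (ofList u) (ofList v)) :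
    word u = word v := by
  rw [← coe_ofList, ← coe_ofList]
  exact (stylCon A).eq.mpr (ConGen.Rel.of _ _ h)

-- The relations carry a right factor `s` so that they rewrite inside right-associated products.
lemma letter_mul_letter_mul (a : A) (s : Styl A) : letter a * (letter a * s) = letter a * s := by
  simpa [← mul_assoc] using congrArg (· * s) (word_eq_of_stylicRel (.idem a))

lemma letter_acb_eq_cab {a b c : A} (hab : a < b) (hbc : b < c) (s : Styl A) :
    letter a * (letter c * (letter b * s)) = letter c * (letter a * (letter b * s)) := by
  simpa [mul_assoc] using congrArg (· * s) (word_eq_of_stylicRel (.knuth2 hab hbc))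

lemma letter_aba_eq_baa {a b : A} (hab : a < b) (s : Styl A) :
    letter a * (letter b * (letter a * s)) = letter b * (letter a * (letter a * s)) := by
  simpa [mul_assoc] using congrArg (· * s) (word_eq_of_stylicRel (.knuth4 hab))

/-- Repeated `acb ≡ cab`, each time with `b` the letter that follows `a`. -/
lemma word_mul_large_letter {l : List A} {b c : A} (hl : l.Pairwise (· < ·))
    (hlb : ∀ a ∈ l, a < b) (hbc : b < c) (s : Styl A) :
    word l * (letter c * (letter b * s)) = letter c * (word l * (letter b * s)) := by
  induction l with
  | nil => simp
  | cons a l ih =>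
    obtain ⟨hal, hl⟩ := List.pairwise_cons.mp hl
    have hab : a < b := hlb a List.mem_cons_self
    rw [word_cons, mul_assoc, ih hl fun a' ha' => hlb a' (List.mem_cons_of_mem a ha')]
    cases l with
    | nil => simpa using letter_acb_eq_cab hab hbc s
    | cons e l =>
      simpa [mul_assoc] using
        letter_acb_eq_cab (hal e (by simp)) ((hlb e (by simp)).trans hbc) (word l * (letter b * s))

lemma word_mul_word_mul_letter_comm {X Z : List A} {y : A} (hX : X.Pairwise (· < ·))
    (hXy : ∀ a ∈ X, a < y) (hZy : ∀ b ∈ Z, y < b) (s : Styl A) :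
    word X * (word Z * (letter y * s)) = word Z * (word X * (letter y * s)) := by
  induction Z using List.reverseRecOn generalizing s with
  | nil => simp
  | append_singleton Z c ih =>
    have hyc : y < c := hZy c (by simp)
    have ih := ih (fun b hb => hZy b (by simp [hb]))
    simp only [word_append, word_cons, word_nil, mul_one, mul_assoc]
    calc word X * (word Z * (letter c * (letter y * s)))
        = word X * (word Z * (letter y * (letter c * (letter y * s)))) := by
          rw [letter_aba_eq_baa hyc, letter_mul_letter_mul]
      _ = word Z * (word X * (letter c * (letter y * (letter y * s)))) := by
          rw [ih, letter_aba_eq_baa hyc]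
      _ = word Z * (letter c * (word X * (letter y * s))) := by
          rw [word_mul_large_letter hX hXy hyc, letter_mul_letter_mul]

end Styl

theorem stylic_superplax_left_general {A : Type*} [LinearOrder A] {p q : ℕ}
    (x : Fin p → A) (z : Fin q → A) (y : A)
    (hx : StrictMono x)
    (hxy : ∀ i, x i < y) (hyz : ∀ j, y < z j) :
    stylCon A (ofList (List.ofFn x ++ List.ofFn z ++ [y]))
      (ofList (List.ofFn z ++ List.ofFn x ++ [y])) := by
  rw [← Con.eq, Styl.coe_ofList, Styl.coe_ofList]
  simpa [mul_assoc] using Styl.word_mul_word_mul_letter_comm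
    (List.pairwise_ofFn.mpr fun _ _ h => hx h) (by simpa [List.mem_ofFn] using hxy)
    (by simpa [List.mem_ofFn] using hyz) 1

/-- Lemma `superplax`, first identity: for letters
`x₁ < ⋯ < x_p < y < z₁ < ⋯ < z_q`, the words `(x₁⋯x_p)(z₁⋯z_q)y` and
`(z₁⋯z_q)(x₁⋯x_p)y` are stylically congruent. -/
theorem stylic_superplax_left {A : Type*} [LinearOrder A] {p q : ℕ}
    (hp : 1 ≤ p) (hq : 1 ≤ q) (x : Fin p → A) (z : Fin q → A) (y : A)
    (hx : StrictMono x) (hz : StrictMono z)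
    (hxy : ∀ i, x i < y) (hyz : ∀ j, y < z j) :
    stylCon A (ofList (List.ofFn x ++ List.ofFn z ++ [y]))
      (ofList (List.ofFn z ++ List.ofFn x ++ [y])) :=
  stylic_superplax_left_general x z y hx hxy hyz
end
end

section
/- For letters x_1 < x_2 < ... < x_p < y < z_1 < ... < z_q in a totally ordered alphabet, the words y(x_1...x_p)(z_1...z_q) and y(z_1...z_q)(x_1...x_p) are congruent modulo the stylic congruence. -/
noncomputable section

open FreeMonoid

/-! Since `w x w ≡ w w x ≡ w x` for `x < w`, a copy of a leading `w` may be inserted or deleted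
right after any smaller letter. So while a letter `z > w` travels leftwards over letters smaller
than `w`, a fresh `w` can always be placed in front of the pair to apply the Knuth relation
`w x z ≡ w z x`. Moving the increasing word `z₁⋯z_q` letter by letter, each `zⱼ` then plays the
role of `w` for the letters behind it. -/

section

variable {A : Type*} [LinearOrder A]

lemma stylCon_append_append (l r : List A) {u v : List A}
    (h : stylCon A (ofList u) (ofList v)) :
    stylCon A (ofList (l ++ u ++ r)) (ofList (l ++ v ++ r)) := by
  simpa only [ofList_append, mul_assoc] using
    (stylCon A).mul ((stylCon A).mul ((stylCon A).refl (ofList l)) h) ((stylCon A).refl (ofList r))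

lemma stylCon_of_stylicRel {u v : List A} (h : StylicRel A (ofList u) (ofList v)) (l r : List A) :
    stylCon A (ofList (l ++ u ++ r)) (ofList (l ++ v ++ r)) :=
  stylCon_append_append l r (ConGen.Rel.of _ _ h)

lemma stylCon_cons_cons_cons_self {a b : A} (hab : a < b) (u : List A) :
    stylCon A (ofList (b :: a :: b :: u)) (ofList (b :: a :: u)) := by
  have bab_bba : stylCon A (ofList (b :: a :: b :: u)) (ofList (b :: b :: a :: u)) := by
    simpa using stylCon_of_stylicRel (StylicRel.knuth3 hab) [] u
  have bb_b : stylCon A (ofList (b :: b :: a :: u)) (ofList (b :: a :: u)) := by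
    simpa using stylCon_of_stylicRel (StylicRel.idem b) [] (a :: u)
  exact bab_bba.trans bb_b

lemma stylCon_cons_append_singleton {w z : A} (hwz : w < z) {X : List A}
    (hX : ∀ a ∈ X, a < w) :
    stylCon A (ofList (w :: (X ++ [z]))) (ofList (w :: z :: X)) := by
  induction X with
  | nil => exact (stylCon A).refl _
  | cons x X ih =>
    have hxw : x < w := hX x List.mem_cons_self
    have ih := ih fun a ha => hX a (List.mem_cons_of_mem x ha)
    have insert_w :
        stylCon A (ofList (w :: x :: (X ++ [z]))) (ofList (w :: x :: w :: (X ++ [z]))) :=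
      (stylCon A).symm (stylCon_cons_cons_cons_self hxw _)
    have move_z :
        stylCon A (ofList (w :: x :: w :: (X ++ [z]))) (ofList (w :: x :: w :: z :: X)) := by
      simpa using stylCon_append_append [w, x] [] ih
    have remove_w : stylCon A (ofList (w :: x :: w :: z :: X)) (ofList (w :: x :: z :: X)) :=
      stylCon_cons_cons_cons_self hxw _
    have swap_xz : stylCon A (ofList (w :: x :: z :: X)) (ofList (w :: z :: x :: X)) := by
      simpa using stylCon_of_stylicRel (StylicRel.knuth1 hxw hwz) [] X
    exact ((insert_w.trans move_z).trans remove_w).trans swap_xz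

lemma stylCon_cons_append_comm {w : A} {X Z : List A} (hX : ∀ a ∈ X, a < w)
    (hZ : ∀ b ∈ Z, w < b) (hZ_sorted : Z.Pairwise (· < ·)) :
    stylCon A (ofList (w :: (X ++ Z))) (ofList (w :: (Z ++ X))) := by
  induction Z generalizing w X with
  | nil => simpa using (stylCon A).refl _
  | cons z Z ih =>
    obtain ⟨hzZ, hZ_sorted⟩ := List.pairwise_cons.mp hZ_sorted
    have hwz : w < z := hZ z List.mem_cons_self
    have move_z : stylCon A (ofList (w :: (X ++ z :: Z))) (ofList (w :: z :: (X ++ Z))) := by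
      simpa using stylCon_append_append [] Z (stylCon_cons_append_singleton hwz hX)
    have move_Z : stylCon A (ofList (w :: z :: (X ++ Z))) (ofList (w :: z :: (Z ++ X))) := by
      simpa using stylCon_append_append [w] []
        (ih (fun a ha => (hX a ha).trans hwz) hzZ hZ_sorted)
    exact (stylCon A).trans move_z move_Z

end

theorem stylic_superplax_right_general {A : Type*} [LinearOrder A] {p q : ℕ}
    (x : Fin p → A) (z : Fin q → A) (y : A)
    (hz : StrictMono z)
    (hxy : ∀ i, x i < y) (hyz : ∀ j, y < z j) :
    stylCon A (ofList ([y] ++ List.ofFn x ++ List.ofFn z))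
      (ofList ([y] ++ List.ofFn z ++ List.ofFn x)) := by
  simpa using stylCon_cons_append_comm (List.forall_mem_ofFn_iff.mpr hxy)
    (List.forall_mem_ofFn_iff.mpr hyz) (List.pairwise_ofFn.mpr fun _ _ h => hz h)

/-- Lemma `superplax`, second identity: for letters
`x₁ < ⋯ < x_p < y < z₁ < ⋯ < z_q`, the words `y(x₁⋯x_p)(z₁⋯z_q)` and
`y(z₁⋯z_q)(x₁⋯x_p)` are stylically congruent. -/
theorem stylic_superplax_right {A : Type*} [LinearOrder A] {p q : ℕ}
    (hp : 1 ≤ p) (hq : 1 ≤ q) (x : Fin p → A) (z : Fin q → A) (y : A)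
    (hx : StrictMono x) (hz : StrictMono z)
    (hxy : ∀ i, x i < y) (hyz : ∀ j, y < z j) :
    stylCon A (ofList ([y] ++ List.ofFn x ++ List.ofFn z))
      (ofList ([y] ++ List.ofFn z ++ List.ofFn x)) :=
  stylic_superplax_right_general x z y hz hxy hyz
end
end

section
/- The elements e_γ = (∏_{a ∉ γ, increasing}(1 - a)) · (∏_{a ∈ γ, decreasing} a), indexed by subsets γ of A, are pairwise orthogonal idempotents in ℤStyl(A): e_γ² = e_γ and e_γ e_δ = 0 for γ ≠ δ. -/
noncomputable section

open FreeMonoid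

/-- The image of a letter `a` in the stylic algebra `ℤStyl(A)`. -/
def styGen {A : Type*} [LinearOrder A] (a : A) : MonoidAlgebra ℤ (Styl A) :=
  MonoidAlgebra.of ℤ (Styl A) ((stylCon A).mk' (FreeMonoid.of a))

/-- The idempotent `e_γ = (∏_{a∉γ}^{↗} (1-a)) · (∏_{a∈γ}^{↘} a)` of `ℤStyl(A)`
associated with a column (subset) `γ ⊆ A`. -/
def eIdem {A : Type*} [LinearOrder A] [Fintype A] (γ : Finset A) :
    MonoidAlgebra ℤ (Styl A) :=
  (((γᶜ).sort (· ≤ ·)).map (fun a => 1 - styGen a)).prod *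
    ((γ.sort (· ≤ ·)).reverse.map styGen).prod

/-! In a ring with an idempotent `e`, the elements `x` with `e x e = x e` form a subring. For
the idempotent generator `m` of `ℤStyl(A)` it contains every letter `a ≥ m`, since
`m a m ≡ a m m ≡ a m`. Peeling off the least letter `m` writes `e_γ` as `X m` (if `m ∈ γ`) or
`(1 - m) X` (if `m ∉ γ`), with `X` built from the larger letters and hence in this subring; the
identities `m X m = X m` and `m (1 - m) = 0` then reduce idempotence and orthogonality to the
smaller alphabet. -/

namespace IsIdempotentElem

variable {R : Type*} [Ring R] {e x y : R} (he : IsIdempotentElem e)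
include he

/-- The idealizer `{x | x e R ⊆ e R}` of the right ideal `e R`. -/
def idealizer : Subring R where
  carrier := {x | e * x * e = x * e}
  mul_mem' {x y} (hx : e * x * e = x * e) (hy : e * y * e = y * e) :=
    calc e * (x * y) * e = e * x * (e * y * e) := by rw [hy]; simp only [mul_assoc]
      _ = e * x * e * y * e := by simp only [mul_assoc]
      _ = x * (e * y * e) := by rw [hx]; simp only [mul_assoc]
      _ = x * y * e := by rw [hy, mul_assoc]
  one_mem' := show e * 1 * e = 1 * e by rw [mul_one, one_mul, he.eq]
  add_mem' {x y} (hx : e * x * e = x * e) (hy : e * y * e = y * e) := by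
    show e * (x + y) * e = (x + y) * e
    rw [mul_add, add_mul, add_mul, hx, hy]
  zero_mem' := by simp
  neg_mem' {x} (hx : e * x * e = x * e) := by simp [hx]

lemma one_sub_mul_mul_eq_zero (hx : x ∈ he.idealizer) : (1 - e) * x * e = 0 := by
  have hx : e * x * e = x * e := hx
  rw [sub_mul, sub_mul, one_mul, hx, sub_self]

lemma mul_mul_mul_of_mem_idealizer (hy : y ∈ he.idealizer) : x * e * (y * e) = x * y * e := by
  have hy : e * y * e = y * e := hy
  calc x * e * (y * e) = x * (e * y * e) := by simp only [mul_assoc]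
    _ = x * y * e := by rw [hy, mul_assoc]

lemma mul_mul_one_sub_mul : x * e * ((1 - e) * y) = 0 := by
  rw [mul_assoc, ← mul_assoc e, mul_sub, mul_one, he.eq, sub_self, zero_mul, mul_zero]

lemma one_sub_mul_mul_mul (hxy : x * y ∈ he.idealizer) : (1 - e) * x * (y * e) = 0 := by
  rw [mul_assoc, ← mul_assoc x, ← mul_assoc, he.one_sub_mul_mul_eq_zero hxy]

lemma one_sub_mul_mul_one_sub_mul (hx : x ∈ he.idealizer) :
    (1 - e) * x * ((1 - e) * y) = (1 - e) * (x * y) := by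
  calc (1 - e) * x * ((1 - e) * y) = (1 - e) * x * y - (1 - e) * x * e * y := by noncomm_ring
    _ = (1 - e) * (x * y) := by rw [he.one_sub_mul_mul_eq_zero hx, zero_mul, sub_zero, mul_assoc]

end IsIdempotentElem

lemma Finset.sort_filter {α : Type*} (r : α → α → Prop) [DecidableRel r] [IsTrans α r]
    [Std.Antisymm r] [Std.Total r] (s : Finset α) (p : α → Prop) [DecidablePred p] :
    (s.filter p).sort r = (s.sort r).filter p :=
  List.Perm.eq_of_pairwise' ((s.filter p).pairwise_sort r) ((s.pairwise_sort r).filter _) <|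
    (List.perm_ext_iff_of_nodup (Finset.sort_nodup _ _) ((Finset.sort_nodup _ _).filter _)).mpr
      fun a => by simp

section Stylic

variable {A : Type*} [LinearOrder A]

lemma isIdempotentElem_styGen (a : A) : IsIdempotentElem (styGen a) := by
  unfold IsIdempotentElem styGen
  rw [← map_mul, ← map_mul]
  exact congrArg _ ((Con.eq _).mpr (ConGen.Rel.of _ _ (StylicRel.idem a)))

lemma styGen_mul_styGen_mul_styGen_of_lt {m a : A} (h : m < a) :
    styGen m * styGen a * styGen m = styGen a * styGen m * styGen m := by
  unfold styGen
  simp only [← map_mul]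
  exact congrArg _ ((Con.eq _).mpr (ConGen.Rel.of _ _ (StylicRel.knuth4 h)))

lemma styGen_mem_idealizer {m a : A} (h : m ≤ a) :
    styGen a ∈ (isIdempotentElem_styGen m).idealizer := by
  show styGen m * styGen a * styGen m = styGen a * styGen m
  rcases h.eq_or_lt with rfl | h
  · rw [(isIdempotentElem_styGen m).eq, (isIdempotentElem_styGen m).eq]
  · rw [styGen_mul_styGen_mul_styGen_of_lt h, mul_assoc, (isIdempotentElem_styGen m).eq]

def colIdem : List A → Finset A → MonoidAlgebra ℤ (Styl A)
  | [], _ => 1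
  | m :: l, γ => if m ∈ γ then colIdem l γ * styGen m else (1 - styGen m) * colIdem l γ

lemma colIdem_eq_prod (l : List A) (γ : Finset A) :
    colIdem l γ = ((l.filter (· ∉ γ)).map (fun a => 1 - styGen a)).prod *
      ((l.filter (· ∈ γ)).reverse.map styGen).prod := by
  induction l with
  | nil => simp [colIdem]
  | cons m l ih =>
    by_cases hm : m ∈ γ <;> simp [colIdem, hm, ih, mul_assoc]

lemma colIdem_mem_idealizer {m : A} {l : List A} (hl : ∀ a ∈ l, m ≤ a) (γ : Finset A) :
    colIdem l γ ∈ (isIdempotentElem_styGen m).idealizer := by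
  induction l with
  | nil => exact Subring.one_mem _
  | cons a l ih =>
    have ha := styGen_mem_idealizer (hl a List.mem_cons_self)
    have hl := ih fun b hb => hl b (List.mem_cons_of_mem a hb)
    unfold colIdem
    split_ifs
    · exact Subring.mul_mem _ hl ha
    · exact Subring.mul_mem _ (Subring.sub_mem _ (Subring.one_mem _) ha) hl

lemma colIdem_mul_self {l : List A} (hl : l.Pairwise (· ≤ ·)) (γ : Finset A) :
    colIdem l γ * colIdem l γ = colIdem l γ := by
  induction l with
  | nil => exact mul_one 1
  | cons m l ih =>
    obtain ⟨hm, hl⟩ := List.pairwise_cons.mp hl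
    have he := isIdempotentElem_styGen m
    have hX := colIdem_mem_idealizer hm γ
    unfold colIdem
    split_ifs
    · rw [he.mul_mul_mul_of_mem_idealizer hX, ih hl]
    · rw [he.one_sub_mul_mul_one_sub_mul hX, ih hl]

lemma colIdem_mul_eq_zero {l : List A} (hl : l.Pairwise (· ≤ ·)) {γ δ : Finset A} {a : A}
    (ha : a ∈ l) (hγδ : ¬(a ∈ γ ↔ a ∈ δ)) : colIdem l γ * colIdem l δ = 0 := by
  induction l with
  | nil => exact absurd ha List.not_mem_nil
  | cons m l ih =>
    obtain ⟨hm, hl⟩ := List.pairwise_cons.mp hl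
    have he := isIdempotentElem_styGen m
    have hX := colIdem_mem_idealizer hm γ
    have hY := colIdem_mem_idealizer hm δ
    have ih' (hma : a ≠ m) := ih hl ((List.mem_cons.mp ha).resolve_left hma)
    unfold colIdem
    split_ifs with hmγ hmδ hmδ
    · rw [he.mul_mul_mul_of_mem_idealizer hY, ih' (by rintro rfl; tauto), zero_mul]
    · exact he.mul_mul_one_sub_mul
    · exact he.one_sub_mul_mul_mul (Subring.mul_mem _ hX hY)
    · rw [he.one_sub_mul_mul_one_sub_mul hX, ih' (by rintro rfl; tauto), mul_zero]

lemma eIdem_eq_colIdem [Fintype A] (γ : Finset A) :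
    eIdem γ = colIdem (Finset.univ.sort (· ≤ ·)) γ := by
  rw [colIdem_eq_prod, eIdem, ← Finset.sort_filter, ← Finset.sort_filter]
  congr <;> ext <;> simp

end Stylic

/-- Theorem `system`, part 1: the elements `e_γ`,
`γ ⊆ A`, are pairwise orthogonal idempotents of `ℤStyl(A)`. -/
theorem eIdem_orthogonal_idempotents {A : Type*} [LinearOrder A] [Fintype A]
    (γ δ : Finset A) :
    eIdem γ * eIdem γ = eIdem γ ∧ (γ ≠ δ → eIdem γ * eIdem δ = 0) := by
  have hsort := Finset.univ.pairwise_sort (α := A) (· ≤ ·)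
  simp only [eIdem_eq_colIdem]
  refine ⟨colIdem_mul_self hsort γ, fun hne => ?_⟩
  obtain ⟨a, ha⟩ : ∃ a, ¬(a ∈ γ ↔ a ∈ δ) := by
    by_contra! h
    exact hne (Finset.ext h)
  exact colIdem_mul_eq_zero hsort (Finset.mem_sort _ |>.mpr (Finset.mem_univ a)) ha

end
end

section
/- The sum over all subsets γ of A of the elements e_γ = (∏_{a ∉ γ, increasing}(1 - a)) · (∏_{a ∈ γ, decreasing} a) equals 1, and this identity already holds in the free associative ℤ-algebra on A. -/
noncomputable section

open FreeMonoid

/-- The analogue of `e_γ` in the free associative algebra `ℤ⟨A⟩`. -/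
def eFree {A : Type*} [LinearOrder A] [Fintype A] (γ : Finset A) :
    FreeAlgebra ℤ A :=
  (((γᶜ).sort (· ≤ ·)).map (fun a => 1 - FreeAlgebra.ι ℤ a)).prod *
    ((γ.sort (· ≤ ·)).reverse.map (FreeAlgebra.ι ℤ)).prod

/-! Removing the smallest letter `a` of a finite alphabet `s` splits the subsets of `s` into
those avoiding `a`, whose term gains the left factor `1 - a`, and those containing `a`, whose
term gains the right factor `a`; by induction the sum is `(1 - a) · 1 + 1 · a = 1`. Only the
ring axioms are used, so the identity holds for any images of the letters in any ring, in
particular in `ℤ⟨A⟩` and in `ℤStyl(A)`. -/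

section

variable {A R : Type*} [LinearOrder A] [Ring R]

-- `e_γ` over the alphabet `s ⊇ γ`, with the letter `a` read as `f a` in `R`.
def eRel (f : A → R) (s γ : Finset A) : R :=
  (((s \ γ).sort (· ≤ ·)).map (fun a => 1 - f a)).prod * ((γ.sort (· ≤ ·)).reverse.map f).prod

lemma eRel_insert_of_forall_lt_of_notMem (f : A → R) {s γ : Finset A} {a : A}
    (hs : ∀ b ∈ s, a < b) (haγ : a ∉ γ) :
    eRel f (insert a s) γ = (1 - f a) * eRel f s γ := by
  have hle : ∀ b ∈ s \ γ, a ≤ b := fun b hb => (hs b (Finset.mem_sdiff.1 hb).1).le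
  have ha : a ∉ s \ γ := fun h => lt_irrefl a (hs a (Finset.mem_sdiff.1 h).1)
  rw [eRel, eRel, Finset.insert_sdiff_of_notMem _ haγ, Finset.sort_insert _ hle ha,
    List.map_cons, List.prod_cons, mul_assoc]

lemma eRel_insert_insert_of_forall_lt (f : A → R) {s γ : Finset A} {a : A}
    (hs : ∀ b ∈ s, a < b) (hγ : γ ⊆ s) :
    eRel f (insert a s) (insert a γ) = eRel f s γ * f a := by
  have ha : a ∉ s := fun h => lt_irrefl a (hs a h)
  rw [eRel, eRel, Finset.insert_sdiff_insert, Finset.sdiff_insert_of_notMem ha,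
    Finset.sort_insert _ (fun b hb => (hs b (hγ hb)).le) (fun h => ha (hγ h)),
    List.reverse_cons, List.map_append, List.prod_append, List.map_singleton,
    List.prod_singleton, mul_assoc]

theorem sum_powerset_eRel (f : A → R) (s : Finset A) :
    ∑ γ ∈ s.powerset, eRel f s γ = 1 := by
  induction s using Finset.induction_on_min with
  | empty => simp [eRel]
  | insert a s hs ih =>
    have ha : a ∉ s := fun h => lt_irrefl a (hs a h)
    calc ∑ γ ∈ (insert a s).powerset, eRel f (insert a s) γ
        = ∑ γ ∈ s.powerset, eRel f (insert a s) γ +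
            ∑ γ ∈ s.powerset, eRel f (insert a s) (insert a γ) :=
          Finset.sum_powerset_insert ha _
      _ = ∑ γ ∈ s.powerset, (1 - f a) * eRel f s γ + ∑ γ ∈ s.powerset, eRel f s γ * f a := by
          congr 1 <;> refine Finset.sum_congr rfl fun γ hγ => ?_
          · exact eRel_insert_of_forall_lt_of_notMem f hs fun h => ha (Finset.mem_powerset.1 hγ h)
          · exact eRel_insert_insert_of_forall_lt f hs (Finset.mem_powerset.1 hγ)
      _ = 1 := by rw [← Finset.mul_sum, ← Finset.sum_mul, ih, mul_one, one_mul, sub_add_cancel]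

end

/-- Theorem `system`, part 2: `∑_γ e_γ = 1`, and the
identity already holds in the algebra of noncommutative polynomials. -/
theorem sum_eIdem_eq_one {A : Type*} [LinearOrder A] [Fintype A] :
    (∑ γ : Finset A, eFree γ = 1) ∧ (∑ γ : Finset A, eIdem (A := A) γ = 1) := by
  rw [← Finset.powerset_univ]
  exact ⟨sum_powerset_eRel (FreeAlgebra.ι ℤ) _, sum_powerset_eRel styGen _⟩
end
end

section
/- Define a right action of A* on the set of subsets (columns) of A by: γ·c = γ ∪ {c} if c < min(γ), and otherwise γ·c = (γ \ max{x ∈ γ : x ≤ c}) ∪ {c}. Then for every word w and column γ, γ·w = θ(θ(w)·θ(γ)), where θ is the order-reversing involution of A (extended to words by reversal and letterwise application, and to columns letterwise) and the left action is Schensted column insertion. -/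
noncomputable section

open FreeMonoid

/-- Right action of a letter `c` on a column `γ`: if `c < min γ` then
`γ ∪ {c}`; otherwise replace `max {x ∈ γ : x ≤ c}` (the bumped letter) by `c`. -/
def rIns {A : Type*} [LinearOrder A] (γ : Finset A) (c : A) : Finset A :=
  if h : (γ.filter (· ≤ c)).Nonempty then
    insert c (γ.erase ((γ.filter (· ≤ c)).max' h))
  else insert c γ

/-- Schensted left column insertion of a letter `b` into a column `δ`:
if `b > max δ` then `δ ∪ {b}`; otherwise replace `min {x ∈ δ : x ≥ b}`
(the bumped letter) by `b`. -/
def lIns {A : Type*} [LinearOrder A] (b : A) (δ : Finset A) : Finset A :=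
  if h : (δ.filter (b ≤ ·)).Nonempty then
    insert b (δ.erase ((δ.filter (b ≤ ·)).min' h))
  else insert b δ

/-- The right action of a word on a column, `γ·(uv) = (γ·u)·v`. -/
def rActW {A : Type*} [LinearOrder A] (γ : Finset A) (w : List A) : Finset A :=
  w.foldl rIns γ

/-- The left action of a word on a column, `(uv)·γ = u·(v·γ)`. -/
def lActW {A : Type*} [LinearOrder A] (w : List A) (γ : Finset A) : Finset A :=
  w.foldr lIns γ

section Aux
variable {A : Type*} [LinearOrder A] (θ : A → A)

lemma theta_le (hθ : ∀ x y : A, x < y ↔ θ y < θ x) (x y : A) :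
    x ≤ y ↔ θ y ≤ θ x := by
  constructor
  · intro h
    by_contra hc
    exact absurd ((hθ y x).mpr (lt_of_not_ge hc)) (not_lt.mpr h)
  · intro h
    by_contra hc
    exact absurd ((hθ y x).mp (lt_of_not_ge hc)) (not_lt.mpr h)

lemma key_single (hθ : ∀ x y : A, x < y ↔ θ y < θ x)
    (hinv : Function.Involutive θ) (γ : Finset A) (c : A) :
    (rIns γ c).image θ = lIns (θ c) (γ.image θ) := by
  have hinj : Function.Injective θ := hinv.injective
  have hfilt : (γ.image θ).filter (θ c ≤ ·) = (γ.filter (· ≤ c)).image θ := by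
    ext z
    simp only [Finset.mem_filter, Finset.mem_image]
    constructor
    · rintro ⟨⟨x, hx, rfl⟩, h2⟩
      exact ⟨x, ⟨hx, (theta_le θ hθ x c).mpr h2⟩, rfl⟩
    · rintro ⟨x, ⟨hx, hxc⟩, rfl⟩
      exact ⟨⟨x, hx, rfl⟩, (theta_le θ hθ x c).mp hxc⟩
  unfold rIns lIns
  by_cases h : (γ.filter (· ≤ c)).Nonempty
  · have h' : ((γ.image θ).filter (θ c ≤ ·)).Nonempty := by
      rw [hfilt]; exact h.image θ
    rw [dif_pos h, dif_pos h']
    have hmin : ((γ.image θ).filter (θ c ≤ ·)).min' h' = θ ((γ.filter (· ≤ c)).max' h) := by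
      apply le_antisymm
      · apply Finset.min'_le
        rw [hfilt]
        exact Finset.mem_image_of_mem θ (Finset.max'_mem _ h)
      · apply Finset.le_min'
        intro z hz
        rw [hfilt] at hz
        obtain ⟨x, hx, rfl⟩ := Finset.mem_image.mp hz
        exact (theta_le θ hθ x _).mp (Finset.le_max' _ x hx)
    rw [hmin, Finset.image_insert, Finset.image_erase hinj]
  · have h' : ¬ ((γ.image θ).filter (θ c ≤ ·)).Nonempty := by
      rw [hfilt]; simpa using h
    rw [dif_neg h, dif_neg h', Finset.image_insert]

end Aux

theorem right_action_eq_theta_left_action {A : Type*} [LinearOrder A]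
    (θ : A → A) (hθ : ∀ x y : A, x < y ↔ θ y < θ x)
    (hinv : Function.Involutive θ) (γ : Finset A) (w : List A) :
    rActW γ w = (lActW ((w.map θ).reverse) (γ.image θ)).image θ := by
  induction w generalizing γ with
  | nil =>
      simp [rActW, lActW, Finset.image_image, hinv.comp_self, Finset.image_id]
  | cons a t ih =>
      have hstep : lActW (((a :: t).map θ).reverse) (γ.image θ)
          = lActW ((t.map θ).reverse) (lIns (θ a) (γ.image θ)) := by
        simp [lActW, List.foldr_append]
      rw [hstep, ← key_single θ hθ hinv γ a]
      simpa [rActW] using ih (rIns γ a)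
end
end

section
/- For columns γ, δ of the same height and letters b, c, the following are equivalent: (i) the left column insertion of b into δ yields γ with c bumped; (ii) the right action of c on γ yields δ with b bumped. -/
noncomputable section

open FreeMonoid

/-- Lemma `left-right-action`: for columns `γ, δ` of the
same height and letters `b, c`, the following are equivalent:
(i) left insertion of `b` into `δ` yields `γ` with `c` bumped;
(ii) the right action of `c` on `γ` yields `δ` with `b` bumped. -/
theorem left_right_action_equiv {A : Type*} [LinearOrder A]
    (γ δ : Finset A) (b c : A) (hcard : γ.card = δ.card) :
    (∃ h : (δ.filter (b ≤ ·)).Nonempty,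
        (δ.filter (b ≤ ·)).min' h = c ∧ lIns b δ = γ) ↔
    (∃ h : (γ.filter (· ≤ c)).Nonempty,
        (γ.filter (· ≤ c)).max' h = b ∧ rIns γ c = δ) := by
  constructor
  · rintro ⟨h, hc, hγ⟩
    have hcδ := hc ▸ (δ.filter (b ≤ ·)).min'_mem h
    rw [Finset.mem_filter] at hcδ
    obtain ⟨hcδ, hbc⟩ := hcδ
    rw [lIns, dif_pos h, hc] at hγ
    subst hγ
    have hbγ : b ∈ insert b (δ.erase c) := Finset.mem_insert_self _ _
    have hbf : b ∈ (insert b (δ.erase c)).filter (· ≤ c) :=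
      Finset.mem_filter.mpr ⟨hbγ, hbc⟩
    have hne : ((insert b (δ.erase c)).filter (· ≤ c)).Nonempty := ⟨b, hbf⟩
    have hmax : ((insert b (δ.erase c)).filter (· ≤ c)).max' hne = b := by
      apply le_antisymm
      · apply Finset.max'_le
        intro x hx
        rw [Finset.mem_filter, Finset.mem_insert] at hx
        obtain ⟨hx1 | hx1, hx2⟩ := hx
        · exact le_of_eq hx1
        · by_contra hlt
          push_neg at hlt
          have hxf : x ∈ δ.filter (b ≤ ·) :=
            Finset.mem_filter.mpr ⟨Finset.mem_of_mem_erase hx1, hlt.le⟩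
          have := hc ▸ Finset.min'_le _ _ hxf
          exact (Finset.ne_of_mem_erase hx1) (le_antisymm hx2 this)
      · exact Finset.le_max' _ _ hbf
    refine ⟨hne, hmax, ?_⟩
    rw [rIns, dif_pos hne, hmax]
    rcases eq_or_lt_of_le hbc with heq | hlt
    · subst heq
      rw [Finset.erase_insert_eq_erase, Finset.erase_idem, Finset.insert_erase hcδ]
    · have hbδ : b ∉ δ := by
        intro hbδ
        have := hc ▸ Finset.min'_le _ b (Finset.mem_filter.mpr ⟨hbδ, le_refl b⟩)
        exact absurd hlt (not_lt.mpr this)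
      rw [Finset.erase_insert (fun hmem => hbδ (Finset.mem_of_mem_erase hmem)),
        Finset.insert_erase hcδ]
  · rintro ⟨h, hb, hδ⟩
    have hbγ := hb ▸ (γ.filter (· ≤ c)).max'_mem h
    rw [Finset.mem_filter] at hbγ
    obtain ⟨hbγ, hbc⟩ := hbγ
    rw [rIns, dif_pos h, hb] at hδ
    subst hδ
    have hcδ : c ∈ insert c (γ.erase b) := Finset.mem_insert_self _ _
    have hcf : c ∈ (insert c (γ.erase b)).filter (b ≤ ·) :=
      Finset.mem_filter.mpr ⟨hcδ, hbc⟩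
    have hne : ((insert c (γ.erase b)).filter (b ≤ ·)).Nonempty := ⟨c, hcf⟩
    have hmin : ((insert c (γ.erase b)).filter (b ≤ ·)).min' hne = c := by
      apply le_antisymm
      · exact Finset.min'_le _ _ hcf
      · apply Finset.le_min'
        intro x hx
        rw [Finset.mem_filter, Finset.mem_insert] at hx
        obtain ⟨hx1 | hx1, hx2⟩ := hx
        · exact le_of_eq hx1.symm
        · by_contra hlt
          push_neg at hlt
          have hxf : x ∈ γ.filter (· ≤ c) :=
            Finset.mem_filter.mpr ⟨Finset.mem_of_mem_erase hx1, hlt.le⟩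
          have := hb ▸ Finset.le_max' _ _ hxf
          exact (Finset.ne_of_mem_erase hx1) (le_antisymm this hx2)
    refine ⟨hne, hmin, ?_⟩
    rw [lIns, dif_pos hne, hmin]
    rcases eq_or_lt_of_le hbc with heq | hlt
    · subst heq
      rw [Finset.erase_insert_eq_erase, Finset.erase_idem, Finset.insert_erase hbγ]
    · have hcγ : c ∉ γ := by
        intro hcγ
        have := hb ▸ Finset.le_max' (γ.filter (· ≤ c)) c
          (Finset.mem_filter.mpr ⟨hcγ, le_refl c⟩)
        exact absurd hlt (not_lt.mpr this)
      rw [Finset.erase_insert (fun hmem => hcγ (Finset.mem_of_mem_erase hmem)),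
        Finset.insert_erase hbγ]
end
end

section
/- The order-reversing bijection θ of A induces an involutive anti-automorphism of the stylic monoid Styl(A). -/
noncomputable section

open FreeMonoid

/-! Reversing a word and applying a strictly antitone `θ` letterwise turns each Knuth relation
into the mirror one (the first into the second, the third into the fourth) and `aa ≡ a` into
`θa θa ≡ θa`, so it descends to `Styl A` as an anti-endomorphism. It is involutive because
`θ ∘ θ` is strictly monotone on a finite chain, hence the identity. -/

namespace FreeMonoid

variable {α β : Type*}

def mapReverse (f : α → β) (w : FreeMonoid α) : FreeMonoid β := reverse (map f w)

theorem mapReverse_mul (f : α → β) (u v : FreeMonoid α) :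
    mapReverse f (u * v) = mapReverse f v * mapReverse f u := by
  rw [mapReverse, map_mul, reverse_mul]
  rfl

theorem mapReverse_involutive {f : α → α} (hf : Function.Involutive f) :
    Function.Involutive (mapReverse f) := fun w => by
  change List.reverse (List.map f (List.reverse (List.map f w.toList))) = w.toList
  simp [List.map_reverse, hf.comp_self]

end FreeMonoid

section Reflect

variable {A : Type*} [LinearOrder A] {θ : A → A}

theorem StylicRel.mapReverse (hθ : StrictAnti θ) {u v : FreeMonoid A} (h : StylicRel A u v) :
    StylicRel A (mapReverse θ u) (mapReverse θ v) := by
  cases h with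
  | knuth1 hab hbc => exact .knuth2 (hθ hbc) (hθ hab)
  | knuth2 hab hbc => exact .knuth1 (hθ hbc) (hθ hab)
  | knuth3 hab => exact .knuth4 (hθ hab)
  | knuth4 hab => exact .knuth3 (hθ hab)
  | idem a => exact .idem (θ a)

theorem stylCon_mapReverse (hθ : StrictAnti θ) {u v : FreeMonoid A} (h : stylCon A u v) :
    stylCon A (mapReverse θ u) (mapReverse θ v) := by
  induction h with
  | of u v huv => exact ConGen.Rel.of _ _ (huv.mapReverse hθ)
  | refl u => exact (stylCon A).refl _
  | symm _ ih => exact (stylCon A).symm ih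
  | trans _ _ ih₁ ih₂ => exact (stylCon A).trans ih₁ ih₂
  | mul _ _ ih₁ ih₂ =>
    rw [mapReverse_mul, mapReverse_mul]
    exact (stylCon A).mul ih₂ ih₁

end Reflect

namespace Styl

variable {A : Type*} [LinearOrder A]

def mapReverse (θ : A → A) (hθ : StrictAnti θ) (x : Styl A) : Styl A :=
  x.liftOn (fun w => (stylCon A).mk' (FreeMonoid.mapReverse θ w))
    fun _ _ h => (Con.eq _).mpr (stylCon_mapReverse hθ h)

variable {θ : A → A}

theorem mapReverse_mul (hθ : StrictAnti θ) (x y : Styl A) :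
    mapReverse θ hθ (x * y) = mapReverse θ hθ y * mapReverse θ hθ x :=
  Con.induction_on₂ x y fun u v => congrArg (stylCon A).mk' (FreeMonoid.mapReverse_mul θ u v)

theorem mapReverse_involutive (hθ : StrictAnti θ) (hθθ : Function.Involutive θ) :
    Function.Involutive (mapReverse θ hθ) := fun x =>
  Con.induction_on x fun w => congrArg (stylCon A).mk' (FreeMonoid.mapReverse_involutive hθθ w)

end Styl

/-- the order-reversing bijection `θ` of `A` induces an
involutive anti-automorphism of the stylic monoid `Styl(A)`. -/
theorem theta_antiautomorphism {A : Type*} [LinearOrder A] [Fintype A]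
    (θ : A → A) (hθ : ∀ x y : A, x < y ↔ θ y < θ x) :
    ∃ φ : Styl A → Styl A,
      Function.Involutive φ ∧
      (∀ x y : Styl A, φ (x * y) = φ y * φ x) ∧
      φ 1 = 1 ∧
      (∀ a : A, φ ((stylCon A).mk' (FreeMonoid.of a)) =
        (stylCon A).mk' (FreeMonoid.of (θ a))) := by
  have hanti : StrictAnti θ := fun x y h => (hθ x y).mp h
  have hθθ : Function.Involutive θ := fun _ => (hanti.comp hanti).apply_eq
  exact ⟨Styl.mapReverse θ hanti, Styl.mapReverse_involutive hanti hθθ,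
    Styl.mapReverse_mul hanti, rfl, fun _ => rfl⟩
end
end
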